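/- arXiv:2008.13393 — 3 statements merged into one kernel-verified Lean document; each statement's English description precedes it below -/
import Mathlib

section
/- For every real number K > 1 and every family (N_p(i))_{p∈ℕ}, i ∈ ℕ, of increasing sequences of positive integers, there exists a family (E_p(i))_{p∈ℕ}, i ∈ ℕ, of subsets of ℕ, each having positive lower density, such that for every (p,i),(q,j) ∈ ℕ² and every (n,m) ∈ E_p(i) × E_q(j): (1) min(E_p(i)) ≥ N_p(i); (2) if n ≠ m, then |n − m| ≥ max(N_p(i), N_q(j)); (3) if (p,i) ≠ (q,j) and n > m, then n ≥ K·m. -/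
open Filter Topology

/-- Lower density of a set of natural numbers:
`liminf card(E ∩ [0,n]) / (n+1)`. -/
noncomputable def lowerDensity (E : Set ℕ) : ℝ :=
  Filter.liminf (fun n : ℕ =>
    (∑ k ∈ Finset.range (n + 1), Set.indicator E (fun _ => (1 : ℝ)) k) / ((n : ℝ) + 1))
    Filter.atTop

/-!
Take an integer `M ≥ max 2 K` and cut ℕ into the blocks `[M^(2b), 2 M^(2b))`; points of different
blocks differ by a factor at least `M`. Enumerate the pairs `(p, i)` and give block `b` to the pair
whose code is the 2-adic valuation of `b`: the pair with code `e` owns the blocks `2^e (2k+1)`,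
which recur with gaps of `2^(e+1)`. In each block it owns, as soon as `M^(2b) ≥ 2 N p i`, `(p, i)`
takes the arithmetic progression of step `N p i` starting at `M^(2b)`. Distinct points of one block
are `N p i` apart, points of distinct blocks satisfy (2) and (3) by the factor `M`, and since the
owned blocks have bounded gaps on the exponential scale, every long initial segment of ℕ contains a
fixed proportion of the set.
-/

open Finset

lemma lowerDensity_eq_liminf_card (E : Set ℕ) [DecidablePred (· ∈ E)] :
    lowerDensity E =
      liminf (fun n : ℕ => (#{k ∈ range (n + 1) | k ∈ E} : ℝ) / (n + 1)) atTop := by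
  simp only [lowerDensity, Set.indicator_apply, sum_boole]

lemma inv_le_lowerDensity {E : Set ℕ} [DecidablePred (· ∈ E)] {C : ℕ} (hC : 0 < C)
    (h : ∀ᶠ n in atTop, n + 1 ≤ C * #{k ∈ range (n + 1) | k ∈ E}) :
    (C : ℝ)⁻¹ ≤ lowerDensity E := by
  rw [lowerDensity_eq_liminf_card]
  refine le_liminf_of_le (isCoboundedUnder_ge_of_le atTop (x := 1) fun n => ?_) ?_
  · rw [div_le_one (by positivity)]
    exact_mod_cast (card_filter_le _ _).trans (card_range _).le
  · filter_upwards [h] with n hn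
    rw [inv_le_iff_one_le_mul₀' (by positivity), mul_div_assoc', le_div_iff₀ (by positivity),
      one_mul]
    exact_mod_cast hn

lemma StrictMono.exists_le_lt_succ {a : ℕ → ℕ} (ha : StrictMono a) {k₀ n : ℕ}
    (hn : a k₀ ≤ n) : ∃ k, k₀ ≤ k ∧ a k ≤ n ∧ n < a (k + 1) := by
  classical
  have hk₀ : k₀ ≤ n := (ha.id_le k₀).trans hn
  refine ⟨Nat.findGreatest (a · ≤ n) n, Nat.le_findGreatest hk₀ hn,
    Nat.findGreatest_spec (P := (a · ≤ n)) hk₀ hn, ?_⟩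
  by_contra! h
  by_cases hle : Nat.findGreatest (a · ≤ n) n + 1 ≤ n
  · exact Nat.findGreatest_is_greatest (Nat.lt_succ_self _) hle h
  · exact hle ((ha.id_le _).trans h)

lemma padicValNat_two_pow_mul_odd (e k : ℕ) : padicValNat 2 (2 ^ e * (2 * k + 1)) = e := by
  rw [padicValNat.mul (by positivity) (by omega), padicValNat.prime_pow,
    padicValNat.eq_zero_of_not_dvd (by omega), add_zero]

lemma mul_two_mul_pow_le_pow {M b b' : ℕ} (hM : 2 ≤ M) (h : b' < b) :
    M * (2 * M ^ (2 * b')) ≤ M ^ (2 * b) :=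
  calc M * (2 * M ^ (2 * b')) ≤ M * (M * M ^ (2 * b')) := by gcongr
    _ = M ^ (2 * b' + 2) := by ring
    _ ≤ M ^ (2 * b) := Nat.pow_le_pow_right (by omega) (by omega)

section SparseSet

variable {ι : Type*} [Encodable ι] {M : ℕ} {d : ι → ℕ} {s t : ι} {n m : ℕ}

def sparseSet (M : ℕ) (d : ι → ℕ) (s : ι) : Set ℕ :=
  {n | ∃ b j, padicValNat 2 b = Encodable.encode s ∧ 2 * d s ≤ M ^ (2 * b) ∧
    j * d s < M ^ (2 * b) ∧ n = M ^ (2 * b) + j * d s}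

lemma two_mul_le_of_mem_sparseSet (hn : n ∈ sparseSet M d s) : 2 * d s ≤ n := by
  obtain ⟨b, j, -, hd, -, rfl⟩ := hn
  omega

lemma sparseSet_cases (hM : 2 ≤ M) (hn : n ∈ sparseSet M d s) (hm : m ∈ sparseSet M d t)
    (hmn : m < n) : (s = t ∧ d s ≤ n - m) ∨ M * m ≤ n := by
  obtain ⟨b, j, hbs, -, hj, rfl⟩ := hn
  obtain ⟨b', j', hbt, -, hj', rfl⟩ := hm
  rcases lt_trichotomy b' b with hb | rfl | hb
  · right
    have := mul_two_mul_pow_le_pow hM hb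
    have : M * (M ^ (2 * b') + j' * d t) ≤ M * (2 * M ^ (2 * b')) := by gcongr; omega
    omega
  · obtain rfl : s = t := Encodable.encode_injective (hbs.symm.trans hbt)
    have hjj : j' + 1 ≤ j := by
      by_contra!
      have : j * d s ≤ j' * d s := by gcongr; omega
      omega
    have : (j' + 1) * d s ≤ j * d s := by gcongr
    left
    exact ⟨rfl, by rw [add_mul] at this; omega⟩
  · have := mul_two_mul_pow_le_pow hM hb
    have : 2 * M ^ (2 * b) ≤ M * (2 * M ^ (2 * b)) := Nat.le_mul_of_pos_left _ (by omega)
    omega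

lemma max_le_sub_of_mem_sparseSet (hM : 2 ≤ M) (hn : n ∈ sparseSet M d s)
    (hm : m ∈ sparseSet M d t) (hmn : m < n) : max (d s) (d t) ≤ n - m := by
  have hdn := two_mul_le_of_mem_sparseSet hn
  have hdm := two_mul_le_of_mem_sparseSet hm
  rcases sparseSet_cases hM hn hm hmn with ⟨rfl, h⟩ | h
  · simpa using h
  · have : 2 * m ≤ M * m := by gcongr
    omega

lemma max_le_abs_sub_of_mem_sparseSet (hM : 2 ≤ M) (hn : n ∈ sparseSet M d s)
    (hm : m ∈ sparseSet M d t) (hnm : n ≠ m) :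
    (max (d s) (d t) : ℤ) ≤ |(n : ℤ) - m| := by
  rcases hnm.lt_or_gt with h | h
  · have := max_le_sub_of_mem_sparseSet hM hm hn h
    rw [abs_sub_comm, max_comm, abs_of_pos (by omega)]
    omega
  · have := max_le_sub_of_mem_sparseSet hM hn hm h
    rw [abs_of_pos (by omega)]
    omega

lemma mul_le_of_mem_sparseSet (hM : 2 ≤ M) (hst : s ≠ t) (hn : n ∈ sparseSet M d s)
    (hm : m ∈ sparseSet M d t) (hmn : m < n) : M * m ≤ n :=
  (sparseSet_cases hM hn hm hmn).resolve_left fun h => hst h.1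

lemma pow_le_two_mul_mul_card_sparseSet [DecidablePred (· ∈ sparseSet M d s)] (hM : 2 ≤ M)
    {b : ℕ} (hb : padicValNat 2 b = Encodable.encode s) (hd : 0 < d s)
    (hdb : 2 * d s ≤ M ^ (2 * b)) :
    M ^ (2 * b) ≤ 2 * d s * #{k ∈ range (M ^ (2 * b + 1)) | k ∈ sparseSet M d s} := by
  set q := M ^ (2 * b) / d s
  have hq : M ^ (2 * b) ≤ 2 * d s * q := by
    have : M ^ (2 * b) < q * d s + d s := Nat.lt_div_mul_add hd
    have : d s ≤ q * d s := Nat.le_mul_of_pos_left _ (Nat.div_pos (by omega) hd)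
    linarith
  have hmem : ∀ j < q, M ^ (2 * b) + j * d s ∈ sparseSet M d s ∧
      M ^ (2 * b) + j * d s < M ^ (2 * b + 1) := by
    intro j hj
    have : (j + 1) * d s ≤ M ^ (2 * b) := (Nat.le_div_iff_mul_le hd).1 hj
    have : 2 * M ^ (2 * b) ≤ M * M ^ (2 * b) := by gcongr
    refine ⟨⟨b, j, hb, hdb, by linarith, rfl⟩, ?_⟩
    rw [pow_succ]
    linarith
  have hinj : Set.InjOn (fun j => M ^ (2 * b) + j * d s) (range q) := fun j _ j' _ h =>
    Nat.eq_of_mul_eq_mul_right hd (by simpa using h)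
  calc M ^ (2 * b) ≤ 2 * d s * #((range q).image fun j => M ^ (2 * b) + j * d s) := by
        rwa [card_image_of_injOn hinj, card_range]
    _ ≤ _ := by
      gcongr
      intro k hk
      obtain ⟨j, hj, rfl⟩ := mem_image.1 hk
      simpa using (hmem j (mem_range.1 hj)).symm

lemma lowerDensity_sparseSet_pos (hM : 2 ≤ M) (hd : 0 < d s) :
    0 < lowerDensity (sparseSet M d s) := by
  classical
  set e := Encodable.encode s
  set b : ℕ → ℕ := fun k => 2 ^ e * (2 * k + 1)
  set a : ℕ → ℕ := fun k => M ^ (2 * b k + 1)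
  have ha : StrictMono a := strictMono_nat_of_lt_succ fun k =>
    Nat.pow_lt_pow_right hM (by simp only [b]; nlinarith [Nat.one_le_two_pow (n := e)])
  have hab : ∀ k, a (k + 1) = M ^ (2 * b k) * M ^ (2 ^ (e + 2) + 1) := fun k => by
    simp only [a, b, ← pow_add]
    ring_nf
  have hdb : ∀ k, d s ≤ k → 2 * d s ≤ M ^ (2 * b k) := fun k hk =>
    calc 2 * d s ≤ 2 * b k := by simp only [b]; nlinarith [Nat.one_le_two_pow (n := e)]
      _ ≤ 2 ^ (2 * b k) := (Nat.lt_two_pow_self).le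
      _ ≤ M ^ (2 * b k) := Nat.pow_le_pow_left hM _
  refine lt_of_lt_of_le (by positivity)
    (inv_le_lowerDensity (C := 2 * d s * M ^ (2 ^ (e + 2) + 1)) (by positivity) ?_)
  filter_upwards [eventually_ge_atTop (a (d s))] with n hn
  obtain ⟨k, hk, hkn, hnk⟩ := ha.exists_le_lt_succ hn
  calc n + 1 ≤ M ^ (2 * b k) * M ^ (2 ^ (e + 2) + 1) := hab k ▸ hnk
    _ ≤ 2 * d s * #{j ∈ range (a k) | j ∈ sparseSet M d s} * M ^ (2 ^ (e + 2) + 1) := by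
      gcongr
      exact pow_le_two_mul_mul_card_sparseSet hM (padicValNat_two_pow_mul_odd e k) hd (hdb k hk)
    _ ≤ 2 * d s * #{j ∈ range (n + 1) | j ∈ sparseSet M d s} * M ^ (2 ^ (e + 2) + 1) := by
      gcongr
      omega
    _ = _ := by ring

end SparseSet

theorem stmt1_general (K : ℝ) (N : ℕ → ℕ → ℕ)
    (hNpos : ∀ p i : ℕ, 0 < N p i) :
    ∃ E : ℕ → ℕ → Set ℕ,
      (∀ p i : ℕ, 0 < lowerDensity (E p i)) ∧
      -- (1) min (E p i) ≥ N p i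
      (∀ p i : ℕ, ∀ n ∈ E p i, N p i ≤ n) ∧
      -- (2) if n ≠ m then |n − m| ≥ max (N p i) (N q j)
      (∀ p i q j : ℕ, ∀ n ∈ E p i, ∀ m ∈ E q j, n ≠ m →
        (max (N p i) (N q j) : ℤ) ≤ |(n : ℤ) - (m : ℤ)|) ∧
      -- (3) if (p,i) ≠ (q,j) and n > m then n ≥ K·m
      (∀ p i q j : ℕ, (p, i) ≠ (q, j) → ∀ n ∈ E p i, ∀ m ∈ E q j, m < n →
        K * (m : ℝ) ≤ (n : ℝ)) := by
  set M := max 2 ⌈K⌉₊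
  have hM : 2 ≤ M := le_max_left _ _
  have hKM : K ≤ M := (Nat.le_ceil K).trans (by exact_mod_cast le_max_right _ _)
  refine ⟨fun p i => sparseSet M (Function.uncurry N) (p, i),
    fun p i => lowerDensity_sparseSet_pos hM (hNpos p i),
    fun p i n hn =>
      (Nat.le_mul_of_pos_left _ two_pos).trans (two_mul_le_of_mem_sparseSet (s := (p, i)) hn),
    fun p i q j n hn m hm hnm => max_le_abs_sub_of_mem_sparseSet hM hn hm hnm,
    fun p i q j hpq n hn m hm hmn => ?_⟩
  calc K * m ≤ M * m := by gcongr
    _ ≤ n := by exact_mod_cast mul_le_of_mem_sparseSet hM hpq hn hm hmn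

/-- Lemma 2.2 : refined separated sets with positive lower density. -/
theorem stmt1 (K : ℝ) (hK : 1 < K) (N : ℕ → ℕ → ℕ)
    (hNmono : ∀ i : ℕ, StrictMono fun p : ℕ => N p i)
    (hNpos : ∀ p i : ℕ, 0 < N p i) :
    ∃ E : ℕ → ℕ → Set ℕ,
      (∀ p i : ℕ, 0 < lowerDensity (E p i)) ∧
      -- (1) min (E p i) ≥ N p i
      (∀ p i : ℕ, ∀ n ∈ E p i, N p i ≤ n) ∧
      -- (2) if n ≠ m then |n − m| ≥ max (N p i) (N q j)
      (∀ p i q j : ℕ, ∀ n ∈ E p i, ∀ m ∈ E q j, n ≠ m →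
        (max (N p i) (N q j) : ℤ) ≤ |(n : ℤ) - (m : ℤ)|) ∧
      -- (3) if (p,i) ≠ (q,j) and n > m then n ≥ K·m
      (∀ p i q j : ℕ, (p, i) ≠ (q, j) → ∀ n ∈ E p i, ∀ m ∈ E q j, m < n →
        K * (m : ℝ) ≤ (n : ℝ)) :=
  stmt1_general K N hNpos
end

section
/- Let X be a separable Banach space, T a bounded linear operator on X, and α = (α_k)_{k≥1} a completely admissible sequence. If φ_α satisfies the Δ₂-condition, then FHC(T) = FHC_α(T). -/
open Filter Topology

/-- A sequence `α = (α_k)_{k ≥ 1}` is completely admissible: non-negative,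
non-decreasing, with divergent series, and `α_n / ∑_{j=1}^n α_j → 0`. -/
def CompletelyAdmissible (α : ℕ → ℝ) : Prop :=
  (∀ k, 0 ≤ α k) ∧ (∀ k l : ℕ, k ≤ l → α k ≤ α l) ∧
    Filter.Tendsto (fun n : ℕ => ∑ k ∈ Finset.Icc 1 n, α k) Filter.atTop Filter.atTop ∧
    Filter.Tendsto (fun n : ℕ => α n / ∑ k ∈ Finset.Icc 1 n, α k) Filter.atTop (nhds 0)

/-- The lower `α`-density of `E ⊆ ℕ`:
`liminf (∑_{k=1}^n α_k 1_E(k)) / (∑_{k=1}^n α_k)`. -/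
noncomputable def alphaLowerDensity (α : ℕ → ℝ) (E : Set ℕ) : ℝ :=
  Filter.liminf (fun n : ℕ =>
    (∑ k ∈ Finset.Icc 1 n, Set.indicator E α k) / ∑ k ∈ Finset.Icc 1 n, α k)
    Filter.atTop

/-- `φ_α(x) = ∑_{k ≤ x} α_k`. -/
noncomputable def phiAlpha (α : ℕ → ℝ) (x : ℝ) : ℝ :=
  ∑ k ∈ Finset.Icc 1 ⌊x⌋₊, α k

/-- `φ_α` satisfies the Δ₂-condition: `φ_α(2x) ≤ K φ_α(x)` for all large `x`. -/
def Delta2 (α : ℕ → ℝ) : Prop :=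
  ∃ K : ℝ, 0 < K ∧ ∃ x₀ : ℝ, ∀ x : ℝ, x₀ ≤ x → phiAlpha α (2 * x) ≤ K * phiAlpha α x

/-- The set of frequently hypercyclic vectors of an operator. -/
noncomputable def FHC {X : Type*} [NormedAddCommGroup X] [NormedSpace ℝ X]
    (T : X →L[ℝ] X) : Set X :=
  {x | ∀ U : Set X, IsOpen U → U.Nonempty → 0 < lowerDensity {n : ℕ | (T ^ n) x ∈ U}}

/-- The set of `α`-frequently hypercyclic vectors of an operator. -/
noncomputable def FHCalpha {X : Type*} [NormedAddCommGroup X] [NormedSpace ℝ X]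
    (α : ℕ → ℝ) (T : X →L[ℝ] X) : Set X :=
  {x | ∀ U : Set X, IsOpen U → U.Nonempty →
    0 < alphaLowerDensity α {n : ℕ | (T ^ n) x ∈ U}}

/-!
Write `S_n = ∑_{k ≤ n} α_k` and `m = #(E ∩ [1, n])`. Since `α` is non-decreasing,
`S_m ≤ ∑_{k ∈ E ∩ [1, n]} α_k ≤ m α_n`, and the Δ₂-condition `S_{2n} ≤ K S_n` gives both
`S_n ≤ K^j S_m` as soon as `n ≤ 2^j m`, and `n α_n ≤ S_{2n} ≤ K S_n`. Hence if `m ≥ c n` then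
the `α`-weight of `E ∩ [1, n]` is at least `K^{-j} S_n` for `2^j c ≥ 1`, and if that weight is at
least `c S_n` then `m ≥ (c / K) n`. So every return set has positive lower density iff it has
positive lower `α`-density.
-/

open Finset
open scoped Classical

noncomputable def partialSum (α : ℕ → ℝ) (n : ℕ) : ℝ :=
  ∑ k ∈ Icc 1 n, α k

section PartialSum

variable {α : ℕ → ℝ}

lemma partialSum_mono (h0 : 0 ≤ α) : Monotone (partialSum α) := fun _ _ h =>
  sum_le_sum_of_subset_of_nonneg (Icc_subset_Icc_right h) fun k _ _ => h0 k

lemma phiAlpha_natCast (n : ℕ) : phiAlpha α n = partialSum α n := by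
  rw [phiAlpha, Nat.floor_natCast, partialSum]

lemma partialSum_card_le_sum (hα : Monotone α) {F : Finset ℕ} (hF : ∀ k ∈ F, 1 ≤ k) :
    partialSum α #F ≤ ∑ k ∈ F, α k := by
  induction F using Finset.induction_on_max with
  | empty => simp [partialSum]
  | insert a F haF ih =>
    have ha : 1 ≤ a := hF a (mem_insert_self a F)
    have hnotMem : a ∉ F := fun h => lt_irrefl a (haF a h)
    have hcard : #F + 1 ≤ a := by
      calc #F + 1 ≤ #(Ioo 0 a) + 1 := by
            gcongr
            exact fun k hk => mem_Ioo.2 ⟨hF k (mem_insert_of_mem hk), haF k hk⟩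
        _ = a := by rw [Nat.card_Ioo]; omega
    rw [card_insert_of_notMem hnotMem, sum_insert hnotMem, partialSum,
      sum_Icc_succ_top (by omega), add_comm]
    exact add_le_add (hα hcard) (ih fun k hk => hF k (mem_insert_of_mem hk))

lemma mul_le_partialSum_two_mul (h0 : 0 ≤ α) (hα : Monotone α) (n : ℕ) :
    n * α n ≤ partialSum α (2 * n) := by
  calc n * α n = ∑ _k ∈ Ioc n (2 * n), α n := by
        rw [sum_const, Nat.card_Ioc, two_mul, Nat.add_sub_cancel, nsmul_eq_mul]
    _ ≤ ∑ k ∈ Ioc n (2 * n), α k := sum_le_sum fun k hk => hα (mem_Ioc.1 hk).1.le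
    _ ≤ partialSum α (2 * n) :=
      sum_le_sum_of_subset_of_nonneg (fun k hk => by simp only [mem_Ioc, mem_Icc] at hk ⊢; omega)
        fun k _ _ => h0 k

lemma Delta2.exists_partialSum_two_mul_le (hΔ : Delta2 α) :
    ∃ K > 0, ∃ n₀ : ℕ, ∀ n ≥ n₀, partialSum α (2 * n) ≤ K * partialSum α n := by
  obtain ⟨K, hK, x₀, h⟩ := hΔ
  refine ⟨K, hK, ⌈x₀⌉₊, fun n hn => ?_⟩
  have := h n (Nat.ceil_le.1 hn)
  rwa [← phiAlpha_natCast, ← phiAlpha_natCast, Nat.cast_mul, Nat.cast_ofNat]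

lemma partialSum_two_pow_mul_le {K : ℝ} {n₀ : ℕ} (hK : 0 ≤ K)
    (hd : ∀ n ≥ n₀, partialSum α (2 * n) ≤ K * partialSum α n) (j : ℕ) {m : ℕ} (hm : n₀ ≤ m) :
    partialSum α (2 ^ j * m) ≤ K ^ j * partialSum α m := by
  induction j with
  | zero => simp
  | succ j ih =>
    calc partialSum α (2 ^ (j + 1) * m) = partialSum α (2 * (2 ^ j * m)) := by ring_nf
      _ ≤ K * partialSum α (2 ^ j * m) :=
        hd _ (hm.trans (Nat.le_mul_of_pos_left m (by positivity)))
      _ ≤ K * (K ^ j * partialSum α m) := by gcongr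
      _ = K ^ (j + 1) * partialSum α m := by ring

end PartialSum

lemma liminf_div_pos_iff {u v : ℕ → ℝ} (hu : 0 ≤ u) (huv : u ≤ v)
    (hv : ∀ᶠ n in atTop, 0 < v n) :
    0 < liminf (fun n => u n / v n) atTop ↔ ∃ c > 0, ∀ᶠ n in atTop, c * v n ≤ u n := by
  have hv0 : 0 ≤ v := hu.trans huv
  constructor
  · intro h
    refine ⟨_, half_pos h, ?_⟩
    have hbdd : IsBoundedUnder (· ≥ ·) atTop fun n => u n / v n :=
      isBoundedUnder_of ⟨0, fun n => div_nonneg (hu n) (hv0 n)⟩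
    filter_upwards [eventually_lt_of_lt_liminf (half_lt_self h) hbdd, hv] with n hn hvn
    exact ((lt_div_iff₀ hvn).1 hn).le
  · rintro ⟨c, hc, hcu⟩
    have hcobdd : IsCoboundedUnder (· ≥ ·) atTop fun n => u n / v n :=
      isCoboundedUnder_ge_of_le atTop fun n => div_le_one_of_le₀ (huv n) (hv0 n)
    refine hc.trans_le (le_liminf_of_le hcobdd ?_)
    filter_upwards [hcu, hv] with n hn hvn
    exact (le_div_iff₀ hvn).2 hn

lemma lowerDensity_pos_iff (E : Set ℕ) :
    0 < lowerDensity E ↔ ∃ c > (0 : ℝ), ∀ᶠ n : ℕ in atTop, c * n ≤ #{k ∈ Icc 1 n | k ∈ E} := by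
  -- `lowerDensity` also counts `0 ∈ E`, which shifts the count by at most one.
  have hR (n : ℕ) : ∑ k ∈ range (n + 1), E.indicator (fun _ => (1 : ℝ)) k
      = E.indicator 1 0 + #{k ∈ Icc 1 n | k ∈ E} := by
    rw [Nat.range_succ_eq_Icc_zero, ← insert_Icc_add_one_left_eq_Icc n.zero_le,
      sum_insert (by simp), sum_indicator_eq_sum_filter, sum_const, nsmul_one]
    rfl
  have h0_le : (0 : ℝ) ≤ E.indicator 1 0 := Set.indicator_nonneg (fun _ _ => zero_le_one) 0
  have h0_le_one : E.indicator 1 0 ≤ (1 : ℝ) := Set.indicator_le_self' (fun _ _ => zero_le_one) 0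
  have hcard (n : ℕ) : (#{k ∈ Icc 1 n | k ∈ E} : ℝ) ≤ n := by
    exact_mod_cast (card_filter_le _ _).trans (Nat.card_Icc 1 n).le
  rw [lowerDensity, liminf_div_pos_iff (u := fun n => ∑ k ∈ range (n + 1), _)
    (fun n => sum_nonneg fun k _ => Set.indicator_nonneg (fun _ _ => zero_le_one) k)
    (fun n => by simp only [hR]; linarith [hcard n]) (Eventually.of_forall fun n => by positivity)]
  simp only [hR]
  constructor
  · rintro ⟨c, hc, h⟩
    refine ⟨c / 2, half_pos hc, ?_⟩
    filter_upwards [h, (tendsto_natCast_atTop_atTop.const_mul_atTop hc).eventually_ge_atTop 2]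
      with n hn hn2
    linarith
  · rintro ⟨c, hc, h⟩
    refine ⟨c / 2, half_pos hc, ?_⟩
    filter_upwards [h, eventually_ge_atTop 1] with n hn hn1
    have : c ≤ c * n := le_mul_of_one_le_right hc.le (by exact_mod_cast hn1)
    linarith

lemma alphaLowerDensity_pos_iff {α : ℕ → ℝ} (h0 : 0 ≤ α)
    (hS : Tendsto (partialSum α) atTop atTop) (E : Set ℕ) :
    0 < alphaLowerDensity α E ↔
      ∃ c > 0, ∀ᶠ n in atTop, c * partialSum α n ≤ ∑ k ∈ Icc 1 n with k ∈ E, α k := by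
  have hweight (n : ℕ) : ∑ k ∈ Icc 1 n with k ∈ E, α k = partialSum (E.indicator α) n :=
    (sum_indicator_eq_sum_filter ..).symm
  simp only [hweight]
  exact liminf_div_pos_iff (v := partialSum α)
    (fun n => sum_nonneg fun k _ => Set.indicator_nonneg (fun k _ => h0 k) k)
    (fun n => sum_le_sum fun k _ => Set.indicator_le_self' (fun k _ => h0 k) k)
    (hS.eventually_gt_atTop 0)

section Comparison

variable {α : ℕ → ℝ} {K : ℝ} {n₀ : ℕ} (h0 : 0 ≤ α) (hα : Monotone α) (hK : 0 < K)
  (hd : ∀ n ≥ n₀, partialSum α (2 * n) ≤ K * partialSum α n)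
include h0 hα hK hd

lemma exists_partialSum_le_of_card_ge {E : Set ℕ} {c : ℝ} (hc : 0 < c)
    (hE : ∀ᶠ n : ℕ in atTop, c * n ≤ #{k ∈ Icc 1 n | k ∈ E}) :
    ∃ c' > 0, ∀ᶠ n in atTop, c' * partialSum α n ≤ ∑ k ∈ Icc 1 n with k ∈ E, α k := by
  obtain ⟨j, hj⟩ := pow_unbounded_of_one_lt c⁻¹ one_lt_two
  refine ⟨(K ^ j)⁻¹, by positivity, ?_⟩
  filter_upwards [hE, (tendsto_natCast_atTop_atTop.const_mul_atTop hc).eventually_ge_atTop n₀]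
    with n hn hn₀
  set m := #{k ∈ Icc 1 n | k ∈ E}
  have hm₀ : n₀ ≤ m := by exact_mod_cast hn₀.trans hn
  have hnm : n ≤ 2 ^ j * m := by
    have hjc : 1 ≤ (2 : ℝ) ^ j * c := by rw [inv_lt_iff_one_lt_mul₀ hc] at hj; linarith
    have : (n : ℝ) ≤ 2 ^ j * m :=
      calc (n : ℝ) ≤ 2 ^ j * c * n := le_mul_of_one_le_left n.cast_nonneg hjc
        _ ≤ 2 ^ j * m := by rw [mul_assoc]; gcongr
    exact_mod_cast this
  rw [inv_mul_le_iff₀ (by positivity)]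
  calc partialSum α n ≤ partialSum α (2 ^ j * m) := partialSum_mono h0 hnm
    _ ≤ K ^ j * partialSum α m := partialSum_two_pow_mul_le hK.le hd j hm₀
    _ ≤ K ^ j * ∑ k ∈ Icc 1 n with k ∈ E, α k := by
      gcongr
      exact partialSum_card_le_sum hα fun k hk => (mem_Icc.1 (mem_filter.1 hk).1).1

lemma exists_card_ge_of_partialSum_le (hS : ∀ᶠ n in atTop, 0 < partialSum α n) {E : Set ℕ}
    {c : ℝ} (hc : 0 < c)
    (hE : ∀ᶠ n in atTop, c * partialSum α n ≤ ∑ k ∈ Icc 1 n with k ∈ E, α k) :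
    ∃ c' > (0 : ℝ), ∀ᶠ n : ℕ in atTop, c' * n ≤ #{k ∈ Icc 1 n | k ∈ E} := by
  refine ⟨c / K, by positivity, ?_⟩
  filter_upwards [hE, hS, eventually_ge_atTop n₀] with n hn hSn hn₀
  set m := #{k ∈ Icc 1 n | k ∈ E}
  have hweight : ∑ k ∈ Icc 1 n with k ∈ E, α k ≤ m * α n := by
    simpa using sum_le_card_nsmul _ _ _ fun k hk => hα (mem_Icc.1 (mem_filter.1 hk).1).2
  have hαn : n * α n ≤ K * partialSum α n :=
    (mul_le_partialSum_two_mul h0 hα n).trans (hd n hn₀)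
  rw [div_mul_eq_mul_div, div_le_iff₀ hK]
  refine le_of_mul_le_mul_right ?_ hSn
  calc c * n * partialSum α n = n * (c * partialSum α n) := by ring
    _ ≤ n * (m * α n) := mul_le_mul_of_nonneg_left (hn.trans hweight) n.cast_nonneg
    _ = m * (n * α n) := by ring
    _ ≤ m * (K * partialSum α n) := by gcongr
    _ = m * K * partialSum α n := by ring

end Comparison

theorem lowerDensity_pos_iff_alphaLowerDensity_pos {α : ℕ → ℝ} (hα : CompletelyAdmissible α)
    (hΔ : Delta2 α) (E : Set ℕ) : 0 < lowerDensity E ↔ 0 < alphaLowerDensity α E := by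
  obtain ⟨h0, hmono, hS, -⟩ := hα
  obtain ⟨K, hK, n₀, hd⟩ := hΔ.exists_partialSum_two_mul_le
  have hα : Monotone α := fun _ _ => hmono _ _
  rw [lowerDensity_pos_iff, alphaLowerDensity_pos_iff h0 hS]
  constructor
  · rintro ⟨c, hc, hE⟩
    exact exists_partialSum_le_of_card_ge h0 hα hK hd hc hE
  · rintro ⟨c, hc, hE⟩
    exact exists_card_ge_of_partialSum_le h0 hα hK hd (hS.eventually_gt_atTop 0) hc hE

theorem stmt15_general {X : Type*} [NormedAddCommGroup X] [NormedSpace ℝ X]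
    (T : X →L[ℝ] X) (α : ℕ → ℝ) (hα : CompletelyAdmissible α)
    (hΔ : Delta2 α) :
    FHC T = FHCalpha α T :=
  Set.ext fun _ => forall₃_congr fun _ _ _ => lowerDensity_pos_iff_alphaLowerDensity_pos hα hΔ _

/-- Theorem 4.2 (1): if `φ_α` satisfies the Δ₂-condition then
`FHC(T) = FHC_α(T)`. -/
theorem stmt15 {X : Type*} [NormedAddCommGroup X] [NormedSpace ℝ X]
    [CompleteSpace X] [TopologicalSpace.SeparableSpace X]
    (T : X →L[ℝ] X) (α : ℕ → ℝ) (hα : CompletelyAdmissible α)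
    (hΔ : Delta2 α) :
    FHC T = FHCalpha α T :=
  stmt15_general T α hα hΔ
end

section
/- Let α = (α_k)_{k≥1} be a completely admissible sequence and let A ⊆ ℕ be a set of positive lower α-density. Let I_1, …, I_q ⊆ ℕ be sets with ⋃_{j=1}^q I_j = ℕ, and let n_1, …, n_q ∈ ℕ. Then the set B := ⋃_{j=1}^q (n_j + (A ∩ I_j)) has positive lower α-density, where n + E denotes the translate {n + k : k ∈ E}. -/
open Filter Topology

/-! Each `a ∈ A` lies in some `A ∩ I_j`, and `a + n_j ∈ B` with `n_j ≤ N := max_j n_j`. Since `α`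
is non-decreasing, translating only increases weights, so the `α`-weight of `A ∩ [1, n]` is at
most `q` times that of `B ∩ [1, n + N]`. Since `α_n = o(∑_{k ≤ n} α_k)`, a bounded shift `N` of
the range changes the partial sums by a factor at most `2` eventually, whence
`d_α(B) ≥ d_α(A) / (4q)`. -/

noncomputable def alphaSum (α : ℕ → ℝ) (n : ℕ) : ℝ := ∑ k ∈ Finset.Icc 1 n, α k

noncomputable def alphaCount (α : ℕ → ℝ) (E : Set ℕ) (n : ℕ) : ℝ :=
  ∑ k ∈ Finset.Icc 1 n, E.indicator α k

section AlphaCount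

variable {α : ℕ → ℝ} {E F : Set ℕ}

lemma alphaLowerDensity_eq_liminf (α : ℕ → ℝ) (E : Set ℕ) :
    alphaLowerDensity α E = liminf (fun n => alphaCount α E n / alphaSum α n) atTop := rfl

lemma alphaSum_nonneg (hα0 : ∀ k, 0 ≤ α k) (n : ℕ) : 0 ≤ alphaSum α n :=
  Finset.sum_nonneg fun k _ => hα0 k

lemma alphaCount_nonneg (hα0 : ∀ k, 0 ≤ α k) (n : ℕ) : 0 ≤ alphaCount α E n :=
  Finset.sum_nonneg fun k _ => Set.indicator_nonneg (fun k _ => hα0 k) k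

lemma alphaCount_le_alphaSum (hα0 : ∀ k, 0 ≤ α k) (n : ℕ) : alphaCount α E n ≤ alphaSum α n :=
  Finset.sum_le_sum fun k _ => Set.indicator_le_self' (fun k _ => hα0 k) k

lemma alphaCount_div_alphaSum_mem_Icc (hα0 : ∀ k, 0 ≤ α k) (n : ℕ) :
    alphaCount α E n / alphaSum α n ∈ Set.Icc 0 1 :=
  ⟨div_nonneg (alphaCount_nonneg hα0 n) (alphaSum_nonneg hα0 n),
    div_le_one_of_le₀ (alphaCount_le_alphaSum hα0 n) (alphaSum_nonneg hα0 n)⟩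

lemma alphaCount_mono (hα0 : ∀ k, 0 ≤ α k) : Monotone (alphaCount α E) := fun _ _ hmn =>
  Finset.sum_le_sum_of_subset_of_nonneg (Finset.Icc_subset_Icc_right hmn)
    fun k _ _ => Set.indicator_nonneg (fun k _ => hα0 k) k

lemma alphaCount_le_sum_of_subset_iUnion {ι : Type*} [Fintype ι] (hα0 : ∀ k, 0 ≤ α k)
    {S : ι → Set ℕ} (hE : E ⊆ ⋃ i, S i) (n : ℕ) :
    alphaCount α E n ≤ ∑ i, alphaCount α (S i) n := by
  simp only [alphaCount]
  rw [← Finset.sum_comm]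
  refine Finset.sum_le_sum fun k _ => ?_
  by_cases hk : k ∈ E
  · obtain ⟨i, hi⟩ := Set.mem_iUnion.mp (hE hk)
    rw [Set.indicator_of_mem hk, ← Set.indicator_of_mem hi α]
    exact Finset.single_le_sum (f := fun i => (S i).indicator α k)
      (fun i _ => Set.indicator_nonneg (fun k _ => hα0 k) k) (Finset.mem_univ i)
  · rw [Set.indicator_of_notMem hk]
    exact Finset.sum_nonneg fun i _ => Set.indicator_nonneg (fun k _ => hα0 k) k

lemma alphaCount_le_alphaCount_add (hα0 : ∀ k, 0 ≤ α k) (hmono : Monotone α) {m : ℕ}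
    (hEF : ∀ k ∈ E, m + k ∈ F) (n : ℕ) :
    alphaCount α E n ≤ alphaCount α F (n + m) := by
  have hnonneg : ∀ k, 0 ≤ F.indicator α k := Set.indicator_nonneg fun k _ => hα0 k
  calc alphaCount α E n ≤ ∑ k ∈ Finset.Icc 1 n, F.indicator α (m + k) := by
        refine Finset.sum_le_sum fun k _ => ?_
        by_cases hk : k ∈ E
        · rw [Set.indicator_of_mem hk, Set.indicator_of_mem (hEF k hk)]
          exact hmono le_add_self
        · rw [Set.indicator_of_notMem hk]
          exact hnonneg _
    _ = ∑ k ∈ (Finset.Icc 1 n).map (addLeftEmbedding m), F.indicator α k := by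
        rw [Finset.sum_map]; rfl
    _ ≤ alphaCount α F (n + m) := by
        refine Finset.sum_le_sum_of_subset_of_nonneg ?_ fun k _ _ => hnonneg k
        rw [Finset.map_add_left_Icc]
        exact Finset.Icc_subset_Icc (by omega) (by omega)

lemma alphaSum_add_le (hmono : Monotone α) (n N : ℕ) :
    alphaSum α (n + N) ≤ alphaSum α n + N * α (n + N) := by
  have hsplit : alphaSum α (n + N) = alphaSum α n + ∑ k ∈ Finset.Ioc n (n + N), α k := by
    have hIcc : ∀ m, Finset.Icc 1 m = Finset.Ioc 0 m := Finset.Icc_add_one_left_eq_Ioc 0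
    simp only [alphaSum, hIcc]
    exact (Finset.sum_Ioc_consecutive α n.zero_le (n.le_add_right N)).symm
  have htail : ∑ k ∈ Finset.Ioc n (n + N), α k ≤ N * α (n + N) := by
    simpa only [Nat.card_Ioc, Nat.add_sub_cancel_left, nsmul_eq_mul] using
      Finset.sum_le_card_nsmul (Finset.Ioc n (n + N)) α (α (n + N))
      fun k hk => hmono (Finset.mem_Ioc.mp hk).2
  linarith

end AlphaCount

namespace CompletelyAdmissible

variable {α : ℕ → ℝ}

lemma nonneg (hα : CompletelyAdmissible α) (k : ℕ) : 0 ≤ α k := hα.1 k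

lemma monotone (hα : CompletelyAdmissible α) : Monotone α :=
  fun k l hkl => hα.2.1 k l hkl

lemma tendsto_alphaSum (hα : CompletelyAdmissible α) : Tendsto (alphaSum α) atTop atTop :=
  hα.2.2.1

lemma tendsto_div_alphaSum (hα : CompletelyAdmissible α) :
    Tendsto (fun n => α n / alphaSum α n) atTop (𝓝 0) :=
  hα.2.2.2

lemma eventually_alphaSum_add_le_two_mul (hα : CompletelyAdmissible α) (N : ℕ) :
    ∀ᶠ n in atTop, alphaSum α (n + N) ≤ 2 * alphaSum α n := by
  have hshift : Tendsto (fun n => N * (α (n + N) / alphaSum α (n + N))) atTop (𝓝 0) := by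
    rw [← mul_zero (N : ℝ)]
    exact ((tendsto_add_atTop_iff_nat N).mpr hα.tendsto_div_alphaSum).const_mul (N : ℝ)
  filter_upwards [hshift.eventually_lt_const one_half_pos,
    ((tendsto_add_atTop_iff_nat N).mpr hα.tendsto_alphaSum).eventually_gt_atTop 0]
    with n hsmall hpos
  rw [← mul_div_assoc, div_lt_iff₀ hpos] at hsmall
  linarith [alphaSum_add_le hα.monotone n N]

lemma alphaLowerDensity_pos_of_alphaCount_le (hα : CompletelyAdmissible α) {A B : Set ℕ}
    (hA : 0 < alphaLowerDensity α A) {C : ℝ} (hC : 0 < C) (N : ℕ)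
    (hAB : ∀ n, alphaCount α A n ≤ C * alphaCount α B (n + N)) :
    0 < alphaLowerDensity α B := by
  set d := alphaLowerDensity α A
  have hA' : ∀ᶠ n in atTop, d / 2 < alphaCount α A n / alphaSum α n :=
    eventually_lt_of_lt_liminf (half_lt_self hA)
      (isBoundedUnder_of ⟨0, fun n => (alphaCount_div_alphaSum_mem_Icc hα.nonneg n).1⟩)
  have hB : ∀ᶠ n in atTop, d / (4 * C) ≤ alphaCount α B (n + N) / alphaSum α (n + N) := by
    filter_upwards [hA', hα.eventually_alphaSum_add_le_two_mul N,
      hα.tendsto_alphaSum.eventually_gt_atTop 0,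
      ((tendsto_add_atTop_iff_nat N).mpr hα.tendsto_alphaSum).eventually_gt_atTop 0]
      with n hAn hdoubling hSn hSnN
    rw [lt_div_iff₀ hSn] at hAn
    rw [le_div_iff₀ hSnN]
    calc d / (4 * C) * alphaSum α (n + N) ≤ d / (4 * C) * (2 * alphaSum α n) := by gcongr
      _ = d / 2 * alphaSum α n / C := by field_simp; ring
      _ ≤ alphaCount α A n / C := by gcongr
      _ ≤ alphaCount α B (n + N) := (div_le_iff₀' hC).mpr (hAB n)
  rw [alphaLowerDensity_eq_liminf, ← liminf_nat_add _ N]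
  refine (by positivity : 0 < d / (4 * C)).trans_le (le_liminf_of_le ?_ hB)
  exact isCoboundedUnder_ge_of_eventually_le atTop
    (Eventually.of_forall fun n => (alphaCount_div_alphaSum_mem_Icc hα.nonneg (n + N)).2)

end CompletelyAdmissible

lemma alphaCount_le_card_mul_alphaCount_iUnion_translate {α : ℕ → ℝ} (hα0 : ∀ k, 0 ≤ α k)
    (hmono : Monotone α) {ι : Type*} [Fintype ι] (A : Set ℕ) {I : ι → Set ℕ}
    (hI : (⋃ j, I j) = Set.univ) (nn : ι → ℕ) {N : ℕ} (hN : ∀ j, nn j ≤ N) (n : ℕ) :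
    alphaCount α A n ≤
      Fintype.card ι * alphaCount α (⋃ j, (fun k => nn j + k) '' (A ∩ I j)) (n + N) := by
  set B := ⋃ j, (fun k => nn j + k) '' (A ∩ I j)
  have hpiece : ∀ j, alphaCount α (A ∩ I j) n ≤ alphaCount α B (n + N) := fun j =>
    (alphaCount_le_alphaCount_add (F := B) hα0 hmono
      (fun k hk => Set.mem_iUnion.mpr ⟨j, k, hk, rfl⟩) n).trans
      (alphaCount_mono hα0 (Nat.add_le_add_left (hN j) n))
  calc alphaCount α A n ≤ ∑ j, alphaCount α (A ∩ I j) n :=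
        alphaCount_le_sum_of_subset_iUnion hα0 (by rw [← Set.inter_iUnion, hI, Set.inter_univ]) n
    _ ≤ ∑ _j : ι, alphaCount α B (n + N) := Finset.sum_le_sum fun j _ => hpiece j
    _ = Fintype.card ι * alphaCount α B (n + N) := by simp

/-- Lemma 4.6: if `A` has positive lower `α`-density, `I_1, …, I_q` cover `ℕ` and
`n_1, …, n_q ∈ ℕ`, then `B = ⋃_j (n_j + A ∩ I_j)` has positive lower `α`-density. -/
theorem stmt18 (α : ℕ → ℝ) (hα : CompletelyAdmissible α)
    (A : Set ℕ) (hA : 0 < alphaLowerDensity α A)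
    (q : ℕ) (I : Fin q → Set ℕ) (hI : (⋃ j, I j) = Set.univ)
    (nn : Fin q → ℕ) :
    0 < alphaLowerDensity α (⋃ j, (fun k => nn j + k) '' (A ∩ I j)) := by
  have hq : 0 < q := by
    obtain ⟨j, -⟩ := Set.mem_iUnion.mp (hI ▸ Set.mem_univ 0)
    exact j.pos
  refine hα.alphaLowerDensity_pos_of_alphaCount_le hA (C := q) (by exact_mod_cast hq)
    (Finset.univ.sup nn) fun n => ?_
  simpa only [Fintype.card_fin] using
    alphaCount_le_card_mul_alphaCount_iUnion_translate hα.nonneg hα.monotone A hI nn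
      (fun j => Finset.le_sup (Finset.mem_univ j)) n
end
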